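/- arXiv:0705.3739 — 7 statements merged into one kernel-verified Lean document; each statement's English description precedes it below -/
import Mathlib

section
/- Let H : ℝⁿ × ℝⁿ → ℝ be a smooth Hamiltonian and γ : ℝⁿ → ℝⁿ a smooth map whose Jacobian is symmetric (i.e. ∂γ_A/∂q^B = ∂γ_B/∂q^A for all A,B, so γ is a closed 1-form in coordinates). If the function q ↦ H(q, γ(q)) has vanishing differential, then for every curve σ : ℝ → ℝⁿ satisfying σ̇^A(t) = (∂H/∂p_A)(σ(t), γ(σ(t))) for all t, the curve t ↦ (σ(t), γ(σ(t))) satisfies Hamilton's equations: σ̇^A = ∂H/∂p_A and d/dt (γ_A(σ(t))) = −∂H/∂q^A evaluated at (σ(t), γ(σ(t))). -/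
/-- ∂H/∂q^A at (q,p). -/
noncomputable def pdq {n : ℕ} (H : ((Fin n → ℝ) × (Fin n → ℝ)) → ℝ)
    (q p : Fin n → ℝ) (A : Fin n) : ℝ :=
  fderiv ℝ (fun q' => H (q', p)) q (Pi.single A 1)

/-- ∂H/∂p_A at (q,p). -/
noncomputable def pdp {n : ℕ} (H : ((Fin n → ℝ) × (Fin n → ℝ)) → ℝ)
    (q p : Fin n → ℝ) (A : Fin n) : ℝ :=
  fderiv ℝ (fun p' => H (q, p')) p (Pi.single A 1)

/-- ∂γ_A/∂q^B. -/
noncomputable def jac {n : ℕ} (γ : (Fin n → ℝ) → (Fin n → ℝ))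
    (q : Fin n → ℝ) (A B : Fin n) : ℝ :=
  fderiv ℝ γ q (Pi.single B 1) A

lemma clm_sum_single {n : ℕ} {E : Type*} [NormedAddCommGroup E] [NormedSpace ℝ E]
    (M : (Fin n → ℝ) →L[ℝ] E) (w : Fin n → ℝ) :
    M w = ∑ B, w B • M (Pi.single B 1) := by
  conv_lhs => rw [pi_eq_sum_univ w, map_sum]
  refine Finset.sum_congr rfl fun B _ => ?_
  rw [map_smul]
  have : (fun j => if B = j then (1:ℝ) else 0) = Pi.single B 1 := by
    funext j; simp [Pi.single_apply, eq_comm]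
  rw [this]

/-- Geometric Hamilton–Jacobi theorem, direction (ii) ⇒ (i): if `d(H ∘ γ) = 0`
for a closed 1-form `γ`, then every curve `σ` solving `σ̇ = ∂H/∂p (σ, γ∘σ)`
gives an integral curve `(σ, γ∘σ)` of Hamilton's equations. -/
theorem hamilton_jacobi_forward {n : ℕ}
    (H : ((Fin n → ℝ) × (Fin n → ℝ)) → ℝ) (hH : ContDiff ℝ (⊤ : ℕ∞) H)
    (γ : (Fin n → ℝ) → (Fin n → ℝ)) (hγ : ContDiff ℝ (⊤ : ℕ∞) γ)
    (hclosed : ∀ q A B, jac γ q A B = jac γ q B A)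
    (hHJ : ∀ q, fderiv ℝ (fun q' => H (q', γ q')) q = 0)
    (σ : ℝ → (Fin n → ℝ))
    (hσ : ∀ t, HasDerivAt σ (fun A => pdp H (σ t) (γ (σ t)) A) t) :
    ∀ t, HasDerivAt σ (fun A => pdp H (σ t) (γ (σ t)) A) t ∧
      HasDerivAt (fun s => γ (σ s)) (fun A => -pdq H (σ t) (γ (σ t)) A) t := by
  intro t
  refine ⟨hσ t, ?_⟩
  set q := σ t with hq
  set p := γ q with hp
  have hHd : DifferentiableAt ℝ H (q, p) := (hH.differentiable (by simp)) _
  have hγd : DifferentiableAt ℝ γ q := (hγ.differentiable (by simp)) q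
  set L := fderiv ℝ H (q, p) with hL
  set Dγ := fderiv ℝ γ q with hDγ
  -- partial derivatives via the full derivative
  have hpdq : ∀ A, pdq H q p A = L (Pi.single A 1, 0) := by
    intro A
    have h1 : HasFDerivAt (fun q' : Fin n → ℝ => (q', p))
        ((ContinuousLinearMap.id ℝ (Fin n → ℝ)).prod 0) q :=
      HasFDerivAt.prodMk (hasFDerivAt_id q) (hasFDerivAt_const p q)
    have h2 := (hHd.hasFDerivAt.comp q h1)
    have h3 : HasFDerivAt (fun q' => H (q', p))
        (L.comp ((ContinuousLinearMap.id ℝ (Fin n → ℝ)).prod 0)) q := h2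
    rw [pdq, h3.fderiv]
    rfl
  have hpdp : ∀ A, pdp H q p A = L (0, Pi.single A 1) := by
    intro A
    have h1 : HasFDerivAt (fun p' : Fin n → ℝ => (q, p'))
        ((0 : (Fin n → ℝ) →L[ℝ] (Fin n → ℝ)).prod (ContinuousLinearMap.id ℝ (Fin n → ℝ))) p :=
      HasFDerivAt.prodMk (hasFDerivAt_const q p) (hasFDerivAt_id p)
    have h2 := (hHd.hasFDerivAt.comp p h1)
    have h3 : HasFDerivAt (fun p' => H (q, p'))
        (L.comp ((0 : (Fin n → ℝ) →L[ℝ] (Fin n → ℝ)).prod (ContinuousLinearMap.id ℝ (Fin n → ℝ)))) p := h2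
    rw [pdp, h3.fderiv]
    rfl
  -- key identity from dH∘γ = 0
  have hkey : ∀ v : Fin n → ℝ, L (v, Dγ v) = 0 := by
    intro v
    have hcomp : HasFDerivAt (fun q' => H (q', γ q'))
        (L.comp ((ContinuousLinearMap.id ℝ (Fin n → ℝ)).prod Dγ)) q :=
      hHd.hasFDerivAt.comp q (HasFDerivAt.prodMk (hasFDerivAt_id q) hγd.hasFDerivAt)
    have h := hcomp.fderiv
    rw [hHJ q] at h
    have := congrFun (congrArg DFunLike.coe h.symm) v
    simpa using this
  have hLsplit : ∀ (v w : Fin n → ℝ), L (v, w) = L (v, 0) + L (0, w) := by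
    intro v w
    rw [← map_add]
    norm_num
  -- compute -pdq A as a sum
  have hpdq' : ∀ A, -pdq H q p A = ∑ B, pdp H q p B * jac γ q A B := by
    intro A
    have h0 := hkey (Pi.single A 1)
    rw [hLsplit] at h0
    have : L (Pi.single A 1, 0) = -L (0, Dγ (Pi.single A 1)) := by linarith
    rw [hpdq, this, neg_neg]
    rw [show L (0, Dγ (Pi.single A 1)) = (L.comp (ContinuousLinearMap.inr ℝ (Fin n → ℝ) (Fin n → ℝ))) (Dγ (Pi.single A 1)) from rfl,
      clm_sum_single (L.comp (ContinuousLinearMap.inr ℝ (Fin n → ℝ) (Fin n → ℝ))) (Dγ (Pi.single A 1))]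
    refine Finset.sum_congr rfl fun B _ => ?_
    have : Dγ (Pi.single A 1) B = jac γ q B A := rfl
    rw [smul_eq_mul]
    rw [show (L.comp (ContinuousLinearMap.inr ℝ (Fin n → ℝ) (Fin n → ℝ))) (Pi.single B 1)
      = L (0, Pi.single B 1) from rfl, ← hpdp, this, hclosed q B A, mul_comm]
  -- chain rule for γ ∘ σ
  have hchain : HasDerivAt (fun s => γ (σ s)) (Dγ (fun A => pdp H q p A)) t :=
    hγd.hasFDerivAt.comp_hasDerivAt t (hσ t)
  have : Dγ (fun A => pdp H q p A) = fun A => -pdq H q p A := by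
    funext A
    rw [hpdq' A, clm_sum_single Dγ (fun A => pdp H q p A)]
    rw [Finset.sum_apply]
    refine Finset.sum_congr rfl fun B _ => ?_
    simp only [Pi.smul_apply, smul_eq_mul]
    rfl
  rwa [this] at hchain
end

section
/- Let H : ℝⁿ × ℝⁿ → ℝ be a smooth Hamiltonian and γ : ℝⁿ → ℝⁿ smooth with symmetric Jacobian. Suppose that for every smooth curve σ : ℝ → ℝⁿ satisfying σ̇^A(t) = (∂H/∂p_A)(σ(t), γ(σ(t))), the curve t ↦ (σ(t), γ(σ(t))) is an integral curve of the Hamiltonian vector field of H. Then, assuming at each point q₀ there exists such a curve through q₀ (which follows from existence of solutions to ODEs), the function q ↦ H(q, γ(q)) is locally constant, i.e. d(H ∘ γ) = 0. -/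
lemma clm_apply_pi {n : ℕ} {E : Type*} [NormedAddCommGroup E] [NormedSpace ℝ E]
    (M : (Fin n → ℝ) →L[ℝ] E) (v : Fin n → ℝ) :
    M v = ∑ A, v A • M (Pi.single A 1) := by
  have hv : v = ∑ A, v A • (Pi.single A 1 : Fin n → ℝ) := by
    ext B; simp [Pi.single_apply]
  conv_lhs => rw [hv]
  simp [map_sum]

/-- Geometric Hamilton–Jacobi theorem, direction (i) ⇒ (ii): if every curve `σ`
solving `σ̇ = ∂H/∂p (σ, γ∘σ)` yields an integral curve of Hamilton's equations,
and such curves exist through every point, then `d(H ∘ γ) = 0`. -/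
theorem hamilton_jacobi_converse {n : ℕ}
    (H : ((Fin n → ℝ) × (Fin n → ℝ)) → ℝ) (hH : ContDiff ℝ (⊤ : ℕ∞) H)
    (γ : (Fin n → ℝ) → (Fin n → ℝ)) (hγ : ContDiff ℝ (⊤ : ℕ∞) γ)
    (hclosed : ∀ q A B, jac γ q A B = jac γ q B A)
    (hint : ∀ σ : ℝ → (Fin n → ℝ),
      (∀ t, HasDerivAt σ (fun A => pdp H (σ t) (γ (σ t)) A) t) →
      ∀ t, HasDerivAt (fun s => γ (σ s)) (fun A => -pdq H (σ t) (γ (σ t)) A) t)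
    (hexist : ∀ q₀ : Fin n → ℝ, ∃ σ : ℝ → (Fin n → ℝ), σ 0 = q₀ ∧
      ∀ t, HasDerivAt σ (fun A => pdp H (σ t) (γ (σ t)) A) t) :
    ∀ q, fderiv ℝ (fun q' => H (q', γ q')) q = 0 := by
  intro q
  have hHd : Differentiable ℝ H := hH.differentiable (by simp)
  have hγd : Differentiable ℝ γ := hγ.differentiable (by simp)
  set p := γ q with hp
  -- partial derivatives as restrictions of the full derivative
  have hDq : ∀ u, fderiv ℝ (fun q' => H (q', p)) q u = fderiv ℝ H (q, p) (u, 0) := by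
    intro u
    have h1 : HasFDerivAt (fun q' : Fin n → ℝ => (q', p))
        ((ContinuousLinearMap.id ℝ (Fin n → ℝ)).prod 0) q :=
      HasFDerivAt.prodMk (hasFDerivAt_id q) (hasFDerivAt_const p q)
    have h2 : HasFDerivAt (fun q' => H (q', p))
        ((fderiv ℝ H (q, p)).comp ((ContinuousLinearMap.id ℝ (Fin n → ℝ)).prod 0)) q :=
      (hHd (q, p)).hasFDerivAt.comp q h1
    rw [h2.fderiv]; rfl
  have hDp : ∀ u, fderiv ℝ (fun p' => H (q, p')) p u = fderiv ℝ H (q, p) (0, u) := by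
    intro u
    have h1 : HasFDerivAt (fun p' : Fin n → ℝ => (q, p'))
        ((0 : (Fin n → ℝ) →L[ℝ] (Fin n → ℝ)).prod (ContinuousLinearMap.id ℝ (Fin n → ℝ))) p :=
      HasFDerivAt.prodMk (hasFDerivAt_const q p) (hasFDerivAt_id p)
    have h2 : HasFDerivAt (fun p' => H (q, p'))
        ((fderiv ℝ H (q, p)).comp
          ((0 : (Fin n → ℝ) →L[ℝ] (Fin n → ℝ)).prod (ContinuousLinearMap.id ℝ (Fin n → ℝ)))) p :=
      (hHd (q, p)).hasFDerivAt.comp p h1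
    rw [h2.fderiv]; rfl
  -- the curve through q and the key relation Dγ(∂H/∂p) = -∂H/∂q
  obtain ⟨σ, hσ0, hσ⟩ := hexist q
  have hkey0 := hint σ hσ 0
  rw [hσ0] at hkey0
  have hσ0' : HasDerivAt σ (fun A => pdp H q p A) 0 := by
    have := hσ 0; rwa [hσ0] at this
  have hchain : HasDerivAt (fun s => γ (σ s)) (fderiv ℝ γ q (fun A => pdp H q p A)) 0 := by
    have hγσ : HasFDerivAt γ (fderiv ℝ γ q) (σ 0) := by
      rw [hσ0]; exact (hγd q).hasFDerivAt
    have := hγσ.comp_hasDerivAt 0 hσ0'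
    exact this
  have hkey : fderiv ℝ γ q (fun A => pdp H q p A) = fun A => -pdq H q p A :=
    hchain.unique hkey0
  -- derivative of q' ↦ H (q', γ q')
  have hcomp : HasFDerivAt (fun q' => H (q', γ q'))
      ((fderiv ℝ H (q, p)).comp
        ((ContinuousLinearMap.id ℝ (Fin n → ℝ)).prod (fderiv ℝ γ q))) q := by
    have h1 : HasFDerivAt (fun q' : Fin n → ℝ => (q', γ q'))
        ((ContinuousLinearMap.id ℝ (Fin n → ℝ)).prod (fderiv ℝ γ q)) q :=
      HasFDerivAt.prodMk (hasFDerivAt_id q) (hγd q).hasFDerivAt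
    exact (hHd (q, p)).hasFDerivAt.comp q h1
  rw [hcomp.fderiv]
  -- it suffices to check on basis vectors
  ext v
  rw [ContinuousLinearMap.zero_apply, clm_apply_pi]
  refine Finset.sum_eq_zero fun B _ => ?_
  suffices h : ((fderiv ℝ H (q, p)).comp
      ((ContinuousLinearMap.id ℝ (Fin n → ℝ)).prod (fderiv ℝ γ q))) (Pi.single B 1) = 0 by
    rw [h, smul_zero]
  have hsplit : ((Pi.single B 1 : Fin n → ℝ), fderiv ℝ γ q (Pi.single B 1))
      = ((Pi.single B 1 : Fin n → ℝ), 0) + ((0 : Fin n → ℝ), fderiv ℝ γ q (Pi.single B 1)) := by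
    simp
  have : ((fderiv ℝ H (q, p)).comp
      ((ContinuousLinearMap.id ℝ (Fin n → ℝ)).prod (fderiv ℝ γ q))) (Pi.single B 1)
      = fderiv ℝ H (q, p) (Pi.single B 1, 0)
        + fderiv ℝ H (q, p) (0, fderiv ℝ γ q (Pi.single B 1)) := by
    simp only [ContinuousLinearMap.comp_apply, ContinuousLinearMap.prod_apply,
      ContinuousLinearMap.id_apply]
    rw [hsplit, map_add]
  rw [this, ← hDq, ← hDp]
  -- second term: expand Dγ e_B in the basis
  have hsum : fderiv ℝ (fun p' => H (q, p')) p (fderiv ℝ γ q (Pi.single B 1))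
      = ∑ A, jac γ q A B * pdp H q p A := by
    rw [clm_apply_pi (fderiv ℝ (fun p' => H (q, p')) p)]
    refine Finset.sum_congr rfl fun A _ => ?_
    rw [smul_eq_mul]
    rfl
  rw [hsum]
  -- key relation componentwise, with symmetry of the Jacobian
  have hrel : ∑ A, jac γ q A B * pdp H q p A = -pdq H q p B := by
    have h1 : fderiv ℝ γ q (fun A => pdp H q p A) B = -pdq H q p B := by
      rw [hkey]
    rw [← h1, clm_apply_pi (fderiv ℝ γ q) (fun A => pdp H q p A)]
    rw [Finset.sum_apply]
    refine Finset.sum_congr rfl fun A _ => ?_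
    rw [Pi.smul_apply, smul_eq_mul, mul_comm]
    rw [hclosed q A B]
    rfl
  rw [hrel]
  show pdq H q p B + -pdq H q p B = 0
  ring
end

section
/- Let H : ℝⁿ × ℝⁿ → ℝ be smooth, β : ℝⁿ × ℝⁿ → ℝⁿ a smooth external force (the coefficients of a semibasic 1-form β_A dq^A), and γ : ℝⁿ → ℝⁿ smooth with symmetric Jacobian. If for all q and all A, (∂H/∂q^A)(q, γ(q)) + Σ_B (∂H/∂p_B)(q, γ(q)) (∂γ_B/∂q^A)(q) = −β_A(q, γ(q)), then every curve σ satisfying σ̇^A(t) = (∂H/∂p_A)(σ(t), γ(σ(t))) gives rise to an integral curve t ↦ (σ(t), γ(σ(t))) of the forced Hamilton equations q̇^A = ∂H/∂p_A, ṗ_A = −∂H/∂q^A − β_A. -/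
/-- Hamilton–Jacobi with external force, direction (ii) ⇒ (i): if
`d(H ∘ γ) = -γ*β` for a closed 1-form `γ`, then every curve solving
`σ̇ = ∂H/∂p (σ, γ∘σ)` yields an integral curve of the forced Hamilton
equations `q̇ = ∂H/∂p`, `ṗ = -∂H/∂q - β`. -/
theorem forced_hamilton_jacobi_forward {n : ℕ}
    (H : ((Fin n → ℝ) × (Fin n → ℝ)) → ℝ) (hH : ContDiff ℝ (⊤ : ℕ∞) H)
    (β : ((Fin n → ℝ) × (Fin n → ℝ)) → (Fin n → ℝ)) (hβ : ContDiff ℝ (⊤ : ℕ∞) β)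
    (γ : (Fin n → ℝ) → (Fin n → ℝ)) (hγ : ContDiff ℝ (⊤ : ℕ∞) γ)
    (hclosed : ∀ q A B, jac γ q A B = jac γ q B A)
    (hHJ : ∀ q A, pdq H q (γ q) A + ∑ B, pdp H q (γ q) B * jac γ q B A
        = -β (q, γ q) A)
    (σ : ℝ → (Fin n → ℝ))
    (hσ : ∀ t, HasDerivAt σ (fun A => pdp H (σ t) (γ (σ t)) A) t) :
    ∀ t, HasDerivAt σ (fun A => pdp H (σ t) (γ (σ t)) A) t ∧
      HasDerivAt (fun s => γ (σ s))
        (fun A => -pdq H (σ t) (γ (σ t)) A - β (σ t, γ (σ t)) A) t := by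
  intro t
  refine ⟨hσ t, ?_⟩
  have hfd : HasFDerivAt γ (fderiv ℝ γ (σ t)) (σ t) :=
    (hγ.differentiable (by simp) (σ t)).hasFDerivAt
  have hcomp := hfd.comp_hasDerivAt t (hσ t)
  refine hcomp.congr_deriv ?_
  funext A
  set q := σ t
  have hvsum : (fun A => pdp H q (γ q) A)
      = ∑ B, pdp H q (γ q) B • (Pi.single B 1 : Fin n → ℝ) := by
    funext C
    simp [Finset.sum_apply, Pi.single_apply]
  have h1 : fderiv ℝ γ q (fun A => pdp H q (γ q) A)
      = ∑ B, pdp H q (γ q) B • fderiv ℝ γ q (Pi.single B 1) := by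
    rw [hvsum]; simp [map_sum, map_smul]
  rw [h1]
  have h2 : (∑ B, pdp H q (γ q) B • fderiv ℝ γ q (Pi.single B 1)) A
      = ∑ B, pdp H q (γ q) B * jac γ q A B := by
    simp [Finset.sum_apply, jac]
  rw [h2]
  have h3 : ∑ B, pdp H q (γ q) B * jac γ q A B
      = ∑ B, pdp H q (γ q) B * jac γ q B A :=
    Finset.sum_congr rfl fun B _ => by rw [hclosed q A B]
  rw [eq_comm, h3]
  have h := hHJ q A
  linarith
end

section
/- Let H, β, γ be as in the forced Hamilton–Jacobi setup, with γ having symmetric Jacobian. Suppose every curve σ with σ̇^A(t) = (∂H/∂p_A)(σ(t), γ(σ(t))) has t ↦ (σ(t), γ(σ(t))) an integral curve of the forced Hamilton equations ṗ_A = −∂H/∂q^A − β_A. Then (assuming through each point there passes such a curve) for all q: (∂H/∂q^A)(q, γ(q)) + Σ_B (∂H/∂p_B)(q, γ(q)) (∂γ_B/∂q^A)(q) = −β_A(q, γ(q)), i.e. d(H ∘ γ) = −γ*β. -/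
lemma clm_apply_sum {n : ℕ} (f : (Fin n → ℝ) →L[ℝ] (Fin n → ℝ)) (v : Fin n → ℝ)
    (A : Fin n) : f v A = ∑ B, v B * f (Pi.single B 1) A := by
  have hv : v = ∑ B, v B • (Pi.single B 1 : Fin n → ℝ) := by
    funext j
    simp [Finset.sum_apply, Pi.single_apply, mul_ite]
  conv_lhs => rw [hv]
  rw [map_sum]
  simp [Finset.sum_apply, smul_eq_mul]

/-- Hamilton–Jacobi with external force, direction (i) ⇒ (ii): if every curve
solving `σ̇ = ∂H/∂p (σ, γ∘σ)` yields an integral curve of the forced Hamilton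
equations, and such curves exist through every point, then `d(H ∘ γ) = -γ*β`. -/
theorem forced_hamilton_jacobi_converse {n : ℕ}
    (H : ((Fin n → ℝ) × (Fin n → ℝ)) → ℝ) (hH : ContDiff ℝ (⊤ : ℕ∞) H)
    (β : ((Fin n → ℝ) × (Fin n → ℝ)) → (Fin n → ℝ)) (hβ : ContDiff ℝ (⊤ : ℕ∞) β)
    (γ : (Fin n → ℝ) → (Fin n → ℝ)) (hγ : ContDiff ℝ (⊤ : ℕ∞) γ)
    (hclosed : ∀ q A B, jac γ q A B = jac γ q B A)
    (hint : ∀ σ : ℝ → (Fin n → ℝ),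
      (∀ t, HasDerivAt σ (fun A => pdp H (σ t) (γ (σ t)) A) t) →
      ∀ t, HasDerivAt (fun s => γ (σ s))
        (fun A => -pdq H (σ t) (γ (σ t)) A - β (σ t, γ (σ t)) A) t)
    (hexist : ∀ q₀ : Fin n → ℝ, ∃ σ : ℝ → (Fin n → ℝ), σ 0 = q₀ ∧
      ∀ t, HasDerivAt σ (fun A => pdp H (σ t) (γ (σ t)) A) t) :
    ∀ q A, pdq H q (γ q) A + ∑ B, pdp H q (γ q) B * jac γ q B A
      = -β (q, γ q) A := by
  intro q A
  obtain ⟨σ, hσ0, hσ⟩ := hexist q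
  -- chain rule derivative of γ ∘ σ at 0
  have hγd : HasFDerivAt γ (fderiv ℝ γ q) (σ 0) := by
    rw [hσ0]
    exact (hγ.differentiable (by simp) q).hasFDerivAt
  have hchain : HasDerivAt (fun s => γ (σ s))
      (fderiv ℝ γ q (fun A => pdp H (σ 0) (γ (σ 0)) A)) 0 :=
    hγd.comp_hasDerivAt 0 (hσ 0)
  have h2 := hint σ hσ 0
  have heq := hchain.unique h2
  have hA := congrFun heq A
  rw [clm_apply_sum] at hA
  simp only [hσ0] at hA
  have : ∑ B, pdp H q (γ q) B * jac γ q B A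
      = -pdq H q (γ q) A - β (q, γ q) A := by
    rw [← hA]
    exact Finset.sum_congr rfl fun B _ => by rw [hclosed q B A]; rfl
  rw [this]; ring
end

section
/- Nonholonomic Hamilton–Jacobi theorem, direction (ii) ⇒ (i), in coordinates: let H : ℝⁿ × ℝⁿ → ℝ be smooth, Φ^i_A : ℝⁿ → ℝ (1 ≤ i ≤ m) smooth constraint coefficients, and γ : ℝⁿ → ℝⁿ smooth such that (a) Σ_A Φ^i_A(q) (∂H/∂p_A)(q, γ(q)) = 0 for all i and q (γ takes values in the constraint submanifold), (b) there exist smooth functions β_{iA} with ∂γ_A/∂q^B − ∂γ_B/∂q^A = β_{iA} Φ^i_B − β_{iB} Φ^i_A (i.e. dγ lies in the ideal generated by the constraint 1-forms μ^i = Φ^i_A dq^A), and (c) there exist smooth λ̃_i with ∂H/∂q^A(q,γ(q)) + Σ_B ∂H/∂p_B(q,γ(q)) ∂γ_B/∂q^A(q) = λ̃_i(q) Φ^i_A(q) (i.e. d(H∘γ) ∈ D⁰). Then for every curve σ with σ̇^A(t) = (∂H/∂p_A)(σ(t), γ(σ(t))), the curve t ↦ (σ(t), γ(σ(t))) satisfies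 the nonholonomic Hamilton equations: σ̇^A = ∂H/∂p_A and d/dt(γ_A(σ(t))) = −∂H/∂q^A − λ̄_i Φ^i_A for suitable multiplier functions λ̄_i(t), together with the constraints Φ^i_A(σ(t)) (∂H/∂p_A)(σ(t),γ(σ(t))) = 0. -/
/-- Nonholonomic Hamilton–Jacobi theorem, direction (ii) ⇒ (i): if `γ` takes
values in the constraint submanifold, `dγ ∈ ℐ(D⁰)` and `d(H ∘ γ) ∈ D⁰`, then
every curve solving `σ̇ = ∂H/∂p (σ, γ∘σ)` yields an integral curve of the
nonholonomic Hamilton equations, with suitable multipliers, satisfying the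
constraints. -/
theorem nonholonomic_hamilton_jacobi_forward {n m : ℕ}
    (H : ((Fin n → ℝ) × (Fin n → ℝ)) → ℝ) (hH : ContDiff ℝ (⊤ : ℕ∞) H)
    (Φ : Fin m → Fin n → (Fin n → ℝ) → ℝ) (hΦ : ∀ i A, ContDiff ℝ (⊤ : ℕ∞) (Φ i A))
    (γ : (Fin n → ℝ) → (Fin n → ℝ)) (hγ : ContDiff ℝ (⊤ : ℕ∞) γ)
    -- (a) γ takes values in the constraint submanifold M̄
    (hconstr : ∀ q i, ∑ A, Φ i A q * pdp H q (γ q) A = 0)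
    -- (b) dγ ∈ ℐ(D⁰)
    (β : Fin m → Fin n → (Fin n → ℝ) → ℝ) (hβ : ∀ i A, ContDiff ℝ (⊤ : ℕ∞) (β i A))
    (hideal : ∀ q A B, jac γ q A B - jac γ q B A
        = ∑ i, (β i A q * Φ i B q - β i B q * Φ i A q))
    -- (c) d(H ∘ γ) ∈ D⁰
    (lam : Fin m → (Fin n → ℝ) → ℝ) (hlam : ∀ i, ContDiff ℝ (⊤ : ℕ∞) (lam i))
    (hHJ : ∀ q A, pdq H q (γ q) A + ∑ B, pdp H q (γ q) B * jac γ q B A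
        = ∑ i, lam i q * Φ i A q) :
    ∀ σ : ℝ → (Fin n → ℝ),
      (∀ t, HasDerivAt σ (fun A => pdp H (σ t) (γ (σ t)) A) t) →
      ∃ lamBar : Fin m → ℝ → ℝ, ∀ t,
        HasDerivAt (fun s => γ (σ s))
          (fun A => -pdq H (σ t) (γ (σ t)) A
            - ∑ i, lamBar i t * Φ i A (σ t)) t ∧
        ∀ i, ∑ A, Φ i A (σ t) * pdp H (σ t) (γ (σ t)) A = 0 := by
  intro σ hσ
  refine ⟨fun i t => -lam i (σ t) + ∑ B, pdp H (σ t) (γ (σ t)) B * β i B (σ t),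
    fun t => ⟨?_, fun i => hconstr (σ t) i⟩⟩
  set q := σ t with hq
  have hdiff : Differentiable ℝ γ := hγ.differentiable (by simp)
  have h1 : HasDerivAt (fun s => γ (σ s)) (fderiv ℝ γ q (fun A => pdp H q (γ q) A)) t :=
    (hdiff q).hasFDerivAt.comp_hasDerivAt t (hσ t)
  have key : fderiv ℝ γ q (fun A => pdp H q (γ q) A)
      = fun A => -pdq H q (γ q) A
          - ∑ i, (-lam i q + ∑ B, pdp H q (γ q) B * β i B q) * Φ i A q := by
    have hv : (fun A => pdp H q (γ q) A) = ∑ B, Pi.single B (pdp H q (γ q) B) := by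
      rw [Finset.univ_sum_single]
    funext A
    have h2 : fderiv ℝ γ q (fun A => pdp H q (γ q) A) A
        = ∑ B, pdp H q (γ q) B * jac γ q A B := by
      rw [hv, map_sum]
      rw [Finset.sum_apply]
      refine Finset.sum_congr rfl fun B _ => ?_
      have hPs : (Pi.single B (pdp H q (γ q) B) : Fin n → ℝ)
          = pdp H q (γ q) B • (Pi.single B 1 : Fin n → ℝ) := by
        ext j
        simp [Pi.single_apply, mul_ite]
      rw [hPs, map_smul]
      simp [jac, mul_comm]
    rw [h2]
    have hsum : ∑ B, pdp H q (γ q) B * jac γ q A B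
        = ∑ B, pdp H q (γ q) B * jac γ q B A
          + ∑ B, pdp H q (γ q) B * ∑ i, (β i A q * Φ i B q - β i B q * Φ i A q) := by
      rw [← Finset.sum_add_distrib]
      refine Finset.sum_congr rfl fun B _ => ?_
      rw [← mul_add]
      congr 1
      have := hideal q A B
      linarith
    have h3 : ∑ B, pdp H q (γ q) B * jac γ q B A
        = ∑ i, lam i q * Φ i A q - pdq H q (γ q) A := by
      have := hHJ q A; linarith
    have h4 : ∑ B, pdp H q (γ q) B * ∑ i, (β i A q * Φ i B q - β i B q * Φ i A q)
        = - ∑ i, (∑ B, pdp H q (γ q) B * β i B q) * Φ i A q := by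
      calc ∑ B, pdp H q (γ q) B * ∑ i, (β i A q * Φ i B q - β i B q * Φ i A q)
          = ∑ B, ∑ i, (β i A q * (Φ i B q * pdp H q (γ q) B)
              - (pdp H q (γ q) B * β i B q) * Φ i A q) := by
            refine Finset.sum_congr rfl fun B _ => ?_
            rw [Finset.mul_sum]
            exact Finset.sum_congr rfl fun i _ => by ring
        _ = ∑ i, ∑ B, (β i A q * (Φ i B q * pdp H q (γ q) B)
              - (pdp H q (γ q) B * β i B q) * Φ i A q) := Finset.sum_comm
        _ = ∑ i, (β i A q * ∑ B, Φ i B q * pdp H q (γ q) B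
              - (∑ B, pdp H q (γ q) B * β i B q) * Φ i A q) := by
            refine Finset.sum_congr rfl fun i _ => ?_
            rw [Finset.sum_sub_distrib, Finset.mul_sum, Finset.sum_mul]
        _ = - ∑ i, (∑ B, pdp H q (γ q) B * β i B q) * Φ i A q := by
            rw [← Finset.sum_neg_distrib]
            refine Finset.sum_congr rfl fun i _ => ?_
            rw [hconstr q i]; ring
    have expand : ∑ i, (-lam i q + ∑ B, pdp H q (γ q) B * β i B q) * Φ i A q
        = -∑ i, lam i q * Φ i A q
          + ∑ i, (∑ B, pdp H q (γ q) B * β i B q) * Φ i A q := by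
      rw [← Finset.sum_neg_distrib, ← Finset.sum_add_distrib]
      exact Finset.sum_congr rfl fun i _ => by ring
    rw [hsum, h3, h4, expand]
    ring
  rw [← key]
  exact h1
end

section
/- Nonholonomic Hamilton–Jacobi theorem, direction (i) ⇒ (ii), in coordinates: with H, Φ^i_A, γ as above satisfying conditions (a) (γ values in the constraint submanifold) and (b) (dγ ∈ ℐ(D⁰) with coefficient functions β_{iA}), suppose that for every curve σ with σ̇^A(t) = (∂H/∂p_A)(σ(t), γ(σ(t))), there exist multipliers λ̄_i(t) such that d/dt(γ_A(σ(t))) = −(∂H/∂q^A)(σ(t),γ(σ(t))) − λ̄_i(t) Φ^i_A(σ(t)). Then (assuming such a curve exists through each point) for each q there exist scalars λ̃_i such that ∂H/∂q^A(q,γ(q)) + Σ_B ∂H/∂p_B(q,γ(q)) ∂γ_B/∂q^A(q) = λ̃_i Φ^i_A(q) for all A, i.e. d(H∘γ) ∈ D⁰. -/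
/-- Nonholonomic Hamilton–Jacobi theorem, direction (i) ⇒ (ii): if `γ` takes
values in the constraint submanifold, `dγ ∈ ℐ(D⁰)`, and every curve solving
`σ̇ = ∂H/∂p (σ, γ∘σ)` yields an integral curve of the nonholonomic Hamilton
equations for some multipliers, then (assuming such curves exist through each
point) `d(H ∘ γ) ∈ D⁰`. -/
theorem nonholonomic_hamilton_jacobi_converse {n m : ℕ}
    (H : ((Fin n → ℝ) × (Fin n → ℝ)) → ℝ) (hH : ContDiff ℝ (⊤ : ℕ∞) H)
    (Φ : Fin m → Fin n → (Fin n → ℝ) → ℝ) (hΦ : ∀ i A, ContDiff ℝ (⊤ : ℕ∞) (Φ i A))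
    (γ : (Fin n → ℝ) → (Fin n → ℝ)) (hγ : ContDiff ℝ (⊤ : ℕ∞) γ)
    -- (a) γ takes values in the constraint submanifold M̄
    (hconstr : ∀ q i, ∑ A, Φ i A q * pdp H q (γ q) A = 0)
    -- (b) dγ ∈ ℐ(D⁰)
    (β : Fin m → Fin n → (Fin n → ℝ) → ℝ) (hβ : ∀ i A, ContDiff ℝ (⊤ : ℕ∞) (β i A))
    (hideal : ∀ q A B, jac γ q A B - jac γ q B A
        = ∑ i, (β i A q * Φ i B q - β i B q * Φ i A q))
    (hint : ∀ σ : ℝ → (Fin n → ℝ),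
      (∀ t, HasDerivAt σ (fun A => pdp H (σ t) (γ (σ t)) A) t) →
      ∃ lamBar : Fin m → ℝ → ℝ, ∀ t,
        HasDerivAt (fun s => γ (σ s))
          (fun A => -pdq H (σ t) (γ (σ t)) A
            - ∑ i, lamBar i t * Φ i A (σ t)) t)
    (hexist : ∀ q₀ : Fin n → ℝ, ∃ σ : ℝ → (Fin n → ℝ), σ 0 = q₀ ∧
      ∀ t, HasDerivAt σ (fun A => pdp H (σ t) (γ (σ t)) A) t) :
    ∀ q, ∃ lam : Fin m → ℝ, ∀ A,
      pdq H q (γ q) A + ∑ B, pdp H q (γ q) B * jac γ q B A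
        = ∑ i, lam i * Φ i A q := by
  intro q
  obtain ⟨σ, hσ0, hσ⟩ := hexist q
  obtain ⟨lamBar, hlam⟩ := hint σ hσ
  refine ⟨fun i => (∑ B, β i B q * pdp H q (γ q) B) - lamBar i 0, ?_⟩
  intro A
  -- chain rule: derivative of γ ∘ σ at 0
  have hγd : HasFDerivAt γ (fderiv ℝ γ (σ 0)) (σ 0) :=
    (hγ.differentiable (by simp) (σ 0)).hasFDerivAt
  have hcomp : HasDerivAt (fun s => γ (σ s))
      ((fderiv ℝ γ (σ 0)) (fun B => pdp H (σ 0) (γ (σ 0)) B)) 0 :=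
    hγd.comp_hasDerivAt 0 (hσ 0)
  have huniq := (hlam 0).unique hcomp
  -- express fderiv applied to the vector as a sum over jacobian entries
  have hexp : ∀ (w : Fin n → ℝ) (A : Fin n),
      (fderiv ℝ γ (σ 0)) w A = ∑ B, w B * jac γ (σ 0) A B := by
    intro w A
    have hw : w = ∑ B, w B • (Pi.single B 1 : Fin n → ℝ) := by
      funext C
      simp [Finset.sum_apply, Pi.single_apply]
    conv_lhs => rw [hw]
    rw [map_sum]
    simp [jac, Finset.sum_apply]
  have key : ∑ B, pdp H q (γ q) B * jac γ q A B
      = -pdq H q (γ q) A - ∑ i, lamBar i 0 * Φ i A q := by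
    have := congrFun huniq A
    rw [hexp] at this
    rw [hσ0] at this
    exact this.symm
  -- use hideal and hconstr
  have hswap : ∑ B, pdp H q (γ q) B * jac γ q A B
      - ∑ B, pdp H q (γ q) B * jac γ q B A
      = ∑ i, (β i A q * (∑ B, Φ i B q * pdp H q (γ q) B)
        - (∑ B, β i B q * pdp H q (γ q) B) * Φ i A q) := by
    rw [← Finset.sum_sub_distrib]
    calc ∑ B, (pdp H q (γ q) B * jac γ q A B - pdp H q (γ q) B * jac γ q B A)
        = ∑ B, ∑ i, (pdp H q (γ q) B * (β i A q * Φ i B q)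
            - pdp H q (γ q) B * (β i B q * Φ i A q)) := by
          refine Finset.sum_congr rfl fun B _ => ?_
          rw [← mul_sub, hideal q A B, Finset.mul_sum]
          simp [mul_sub]
      _ = ∑ i, ∑ B, (pdp H q (γ q) B * (β i A q * Φ i B q)
            - pdp H q (γ q) B * (β i B q * Φ i A q)) := Finset.sum_comm
      _ = ∑ i, (β i A q * (∑ B, Φ i B q * pdp H q (γ q) B)
            - (∑ B, β i B q * pdp H q (γ q) B) * Φ i A q) := by
          refine Finset.sum_congr rfl fun i _ => ?_
          rw [Finset.sum_sub_distrib, Finset.mul_sum, Finset.sum_mul]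
          congr 1 <;> exact Finset.sum_congr rfl fun B _ => by ring
  have hz : ∑ i, β i A q * (∑ B, Φ i B q * pdp H q (γ q) B) = 0 := by
    simp [hconstr q]
  have hswap' : ∑ B, pdp H q (γ q) B * jac γ q A B
      - ∑ B, pdp H q (γ q) B * jac γ q B A
      = - ∑ i, (∑ B, β i B q * pdp H q (γ q) B) * Φ i A q := by
    rw [hswap, Finset.sum_sub_distrib, hz, zero_sub]
  have hR : ∑ i, ((∑ B, β i B q * pdp H q (γ q) B) - lamBar i 0) * Φ i A q
      = ∑ i, (∑ B, β i B q * pdp H q (γ q) B) * Φ i A q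
        - ∑ i, lamBar i 0 * Φ i A q := by
    rw [← Finset.sum_sub_distrib]
    exact Finset.sum_congr rfl fun i _ => by ring
  rw [hR]
  linarith [key, hswap']
end

section
/- Horizontal lifts of solutions project correctly (Čaplygin Hamilton–Jacobi, coordinate version, direction ⇐): let ρ : ℝⁿ → ℝⁿ⁻ᵐ, (q^a, q^i) ↦ (q^a), with connection coefficients Γ^i_a(q), and suppose the nonholonomic vector field X_nh on the horizontal distribution ℋ ⊂ Tℝⁿ is the horizontal lift (with respect to the prolonged connection Γ̄) of a vector field Y* on Tℝⁿ⁻ᵐ. If σ : ℝ → ℝⁿ is a curve with σ̇(t) = Tτ_Q(X_nh(Y^ℋ(σ(t)))) where Y^ℋ is the horizontal lift of a vector field Y on ℝⁿ⁻ᵐ, then the projected curve μ = ρ ∘ σ satisfies μ̇(t) = Tτ_N(Y*(Y(μ(t)))); consequently, if Y is a Hamilton–Jacobi solution for the reduced system (so Y∘μ is an integral curve of Y*), then Y^ℋ ∘ σ is an integral curve of X_nh. -/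
/-- The configuration space `Q = ℝ^(n-m) × ℝ^m` of a Čaplygin system, fibred
over `N = ℝ^(n-m)` by the first projection. -/
abbrev Conf (k m : ℕ) := (Fin k → ℝ) × (Fin m → ℝ)

/-- Horizontal lift of a base tangent vector `v` at `q`:
`v^ℋ = v^a (∂/∂q^a − Γⁱ_a ∂/∂qⁱ)`. -/
noncomputable def hvec {k m : ℕ} (Γ : Fin m → Fin k → Conf k m → ℝ)
    (q : Conf k m) (v : Fin k → ℝ) : Conf k m :=
  (v, fun i => -∑ a, v a * Γ i a q)

/-- ∂f/∂q^a (base directions). -/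
noncomputable def pdBase {k m : ℕ} (f : Conf k m → ℝ) (q : Conf k m)
    (a : Fin k) : ℝ :=
  fderiv ℝ f q (Pi.single a 1, 0)

/-- ∂f/∂qʲ (fibre directions). -/
noncomputable def pdFib {k m : ℕ} (f : Conf k m → ℝ) (q : Conf k m)
    (j : Fin m) : ℝ :=
  fderiv ℝ f q (0, Pi.single j 1)

/-- The Γ̄-horizontal lift (prolonged connection) of the tangent vector
`(A, B) ∈ T(TN)` at the point `(q, hvec Γ q w)` of `TQ`, following
`(∂/∂q^a)^H̄ = ∂/∂q^a − Γⁱ_a ∂/∂qⁱ − (q̇^b ∂Γⁱ_b/∂q^a − Γʲ_a q̇^b ∂Γⁱ_b/∂qʲ) ∂/∂q̇ⁱ`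
and `(∂/∂q̇^a)^H̄ = ∂/∂q̇^a − Γⁱ_a ∂/∂q̇ⁱ`. -/
noncomputable def pbarLift {k m : ℕ} (Γ : Fin m → Fin k → Conf k m → ℝ)
    (q : Conf k m) (w : Fin k → ℝ) (A B : Fin k → ℝ) : Conf k m × Conf k m :=
  ((A, fun i => -∑ a, A a * Γ i a q),
   (B, fun i => (-∑ a, B a * Γ i a q)
      - ∑ a, A a * ((∑ b, w b * pdBase (Γ i b) q a)
          - ∑ j, Γ j a q * ∑ b, w b * pdFib (Γ i b) q j)))

lemma fderiv_pair_apply {k m : ℕ} (f : Conf k m → ℝ) (q : Conf k m)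
    (A : Fin k → ℝ) (C : Fin m → ℝ) :
    fderiv ℝ f q (A, C) = ∑ b, A b * pdBase f q b + ∑ j, C j * pdFib f q j := by
  have key : ∀ (c : ℝ) (u : Fin k → ℝ) (v : Fin m → ℝ),
      fderiv ℝ f q (c • u, c • v) = c * fderiv ℝ f q (u, v) := by
    intro c u v
    have : ((c • u, c • v) : Conf k m) = c • ((u, v) : Conf k m) := rfl
    rw [this, map_smul, smul_eq_mul]
  have hA : ((A, C) : Conf k m)
      = (∑ b, A b • (((Pi.single b 1 : Fin k → ℝ), (0 : Fin m → ℝ)) : Conf k m))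
        + ∑ j, C j • (((0 : Fin k → ℝ), (Pi.single j 1 : Fin m → ℝ)) : Conf k m) := by
    apply Prod.ext
    · simp [Prod.fst_sum, ← Pi.single_smul, Finset.univ_sum_single]
    · simp [Prod.snd_sum, ← Pi.single_smul, Finset.univ_sum_single]
  rw [hA, map_add, map_sum, map_sum]
  unfold pdBase pdFib
  congr 1
  · exact Finset.sum_congr rfl fun b _ => by
      simpa using key (A b) (Pi.single b 1) 0
  · exact Finset.sum_congr rfl fun j _ => by
      simpa using key (C j) 0 (Pi.single j 1)

lemma triple_swap {α β γ : Type*} [Fintype α] [Fintype β] [Fintype γ]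
    (f : α → β → γ → ℝ) :
    ∑ a, ∑ j, ∑ b, f a j b = ∑ b, ∑ j, ∑ a, f a j b :=
  calc ∑ a, ∑ j, ∑ b, f a j b
      = ∑ j, ∑ a, ∑ b, f a j b := Finset.sum_comm
    _ = ∑ j, ∑ b, ∑ a, f a j b := Finset.sum_congr rfl fun _ _ => Finset.sum_comm
    _ = ∑ b, ∑ j, ∑ a, f a j b := Finset.sum_comm

lemma alg {k m : ℕ} (gi : Fin k → ℝ) (G : Fin m → Fin k → ℝ)
    (PB : Fin k → Fin k → ℝ) (PF : Fin k → Fin m → ℝ) (A B w : Fin k → ℝ) :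
    -∑ a, B a * gi a
      - ∑ a, A a * (∑ b, w b * PB b a - ∑ j, G j a * ∑ b, w b * PF b j)
    = -∑ a, (B a * gi a
        + w a * (∑ b, A b * PB a b + ∑ j, (-∑ c, A c * G j c) * PF a j)) := by
  have e1 : ∑ a, A a * ∑ b, w b * PB b a = ∑ a, w a * ∑ b, A b * PB a b := by
    simp only [Finset.mul_sum]
    rw [Finset.sum_comm]
    exact Finset.sum_congr rfl fun a _ => Finset.sum_congr rfl fun b _ => by ring
  have e2 : ∑ a, A a * ∑ j, G j a * ∑ b, w b * PF b j
      = ∑ a, w a * ∑ j, (∑ c, A c * G j c) * PF a j := by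
    simp only [Finset.mul_sum, Finset.sum_mul]
    refine (triple_swap (fun a j b => A a * (G j a * (w b * PF b j)))).trans ?_
    exact Finset.sum_congr rfl fun a _ => Finset.sum_congr rfl fun j _ =>
      Finset.sum_congr rfl fun c _ => by ring
  have e3 : ∀ a, w a * (∑ b, A b * PB a b + ∑ j, (-∑ c, A c * G j c) * PF a j)
      = w a * ∑ b, A b * PB a b - w a * ∑ j, (∑ c, A c * G j c) * PF a j := by
    intro a
    rw [mul_add]
    congr 1
    · rw [← mul_neg]
      congr 1
      simp [neg_mul, Finset.sum_neg_distrib]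
  simp only [e3, mul_sub, Finset.sum_sub_distrib, Finset.sum_add_distrib]
  rw [← e1, ← e2]
  ring

/-- Čaplygin Hamilton–Jacobi (coordinate version, direction ⇐): if the
nonholonomic vector field `X_nh` is the Γ̄-horizontal lift of `Y*`, then any
curve `σ` with `σ̇(t) = Tτ_Q(X_nh(Y^ℋ(σ(t))))` projects to a curve `μ = ρ ∘ σ`
with `μ̇(t) = Tτ_N(Y*(Y(μ(t))))`; consequently, if `Y` is a Hamilton–Jacobi
solution of the reduced system, `Y^ℋ ∘ σ` is an integral curve of `X_nh`. -/
theorem caplygin_hamilton_jacobi {k m : ℕ}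
    (Γ : Fin m → Fin k → Conf k m → ℝ) (hΓ : ∀ i a, ContDiff ℝ (⊤ : ℕ∞) (Γ i a))
    (Xnh : Conf k m × Conf k m → Conf k m × Conf k m)
    (Ystar : (Fin k → ℝ) × (Fin k → ℝ) → (Fin k → ℝ) × (Fin k → ℝ))
    (hXnh : ∀ (q : Conf k m) (w : Fin k → ℝ),
      Xnh (q, hvec Γ q w)
        = pbarLift Γ q w (Ystar (q.1, w)).1 (Ystar (q.1, w)).2)
    (Y : (Fin k → ℝ) → (Fin k → ℝ)) (hY : ContDiff ℝ (⊤ : ℕ∞) Y)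
    (σ : ℝ → Conf k m)
    (hσ : ∀ t, HasDerivAt σ ((Xnh (σ t, hvec Γ (σ t) (Y (σ t).1))).1) t) :
    (∀ t, HasDerivAt (fun s => (σ s).1) ((Ystar ((σ t).1, Y (σ t).1)).1) t) ∧
    ((∀ μ : ℝ → (Fin k → ℝ),
        (∀ t, HasDerivAt μ ((Ystar (μ t, Y (μ t))).1) t) →
        ∀ t, HasDerivAt (fun s => (μ s, Y (μ s))) (Ystar (μ t, Y (μ t))) t) →
      ∀ t, HasDerivAt (fun s => (σ s, hvec Γ (σ s) (Y (σ s).1)))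
        (Xnh (σ t, hvec Γ (σ t) (Y (σ t).1))) t) := by
  have h1 : ∀ t, HasDerivAt (fun s => (σ s).1) ((Ystar ((σ t).1, Y (σ t).1)).1) t := by
    intro t
    have h := (hσ t).fst
    rw [hXnh] at h
    exact h
  refine ⟨h1, ?_⟩
  intro H t
  have hμ := H (fun s => (σ s).1) h1 t
  have hYσ : HasDerivAt (fun s => Y ((σ s).1)) ((Ystar ((σ t).1, Y ((σ t).1))).2) t := hμ.snd
  set q := σ t with hq
  set w : Fin k → ℝ := Y (σ t).1 with hwdef
  set A : Fin k → ℝ := (Ystar ((σ t).1, w)).1 with hAdef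
  set B : Fin k → ℝ := (Ystar ((σ t).1, w)).2 with hBdef
  set C : Fin m → ℝ := fun i => -∑ a, A a * Γ i a q with hCdef
  have hσ' : HasDerivAt σ (((A, C) : Conf k m)) t := by
    have h := hσ t
    rw [hXnh] at h
    exact h
  have hwa : ∀ a, HasDerivAt (fun s => Y ((σ s).1) a) (B a) t :=
    fun a => hasDerivAt_pi.mp hYσ a
  have hΓc : ∀ i a, HasDerivAt (fun s => Γ i a (σ s))
      (∑ b, A b * pdBase (Γ i a) q b + ∑ j, C j * pdFib (Γ i a) q j) t := by
    intro i a
    have hd := (((hΓ i a).differentiable (by simp)) q).hasFDerivAt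
    have h := hd.comp_hasDerivAt t hσ'
    rwa [fderiv_pair_apply] at h
  have hpi : HasDerivAt (fun s => fun i => -∑ a, Y ((σ s).1) a * Γ i a (σ s))
      (fun i => (-∑ a, B a * Γ i a q)
        - ∑ a, A a * ((∑ b, w b * pdBase (Γ i b) q a)
            - ∑ j, Γ j a q * ∑ b, w b * pdFib (Γ i b) q j)) t := by
    rw [hasDerivAt_pi]
    intro i
    have hsum : HasDerivAt (fun s => ∑ a, Y ((σ s).1) a * Γ i a (σ s))
        (∑ a, (B a * Γ i a q
          + w a * (∑ b, A b * pdBase (Γ i a) q b + ∑ j, C j * pdFib (Γ i a) q j))) t :=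
      HasDerivAt.fun_sum fun a _ => (hwa a).mul (hΓc i a)
    have h := hsum.fun_neg
    convert h using 1
    -- algebra goal
    exact alg (fun a => Γ i a q) (fun j a => Γ j a q)
      (fun b a => pdBase (Γ i b) q a) (fun b j => pdFib (Γ i b) q j) A B w
  have hsnd : HasDerivAt (fun s => hvec Γ (σ s) (Y ((σ s).1)))
      ((pbarLift Γ q w A B).2) t := by
    simp only [hvec]
    exact hYσ.prodMk hpi
  have hfull : HasDerivAt (fun s => (σ s, hvec Γ (σ s) (Y ((σ s).1))))
      (pbarLift Γ q w A B) t := hσ'.prodMk hsnd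
  rw [hXnh]
  exact hfull
end
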